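/- For the Dueck broadcast channel with input (X0,X1,X2) ∈ {0,1}^3, outputs Y=(X0, X1⊕N) and Z=(X0, X2⊕N) where N~Bernoulli(1/2) is independent of the input, the maximum over input distributions P_{X0X1X2} of I(X0X1; Y) equals 1 bit; i.e., without feedback no information can be carried through X1 beyond the clean bit X0. -/

import Mathlib

open scoped BigOperators

variable {Ω : Type*} [Fintype Ω]

/-- Probability mass of the event `X = a` under the weight function `μ`. -/
noncomputable def pm (μ : Ω → ℝ) {α : Type*} [Fintype α] [DecidableEq α]
    (X : Ω → α) (a : α) : ℝ := ∑ ω, if X ω = a then μ ω else 0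

/-- Shannon entropy (in bits) of a discrete random variable `X`. -/
noncomputable def ent (μ : Ω → ℝ) {α : Type*} [Fintype α] [DecidableEq α]
    (X : Ω → α) : ℝ := -∑ a, pm μ X a * Real.logb 2 (pm μ X a)

/-- Mutual information (in bits) between `X` and `Y`. -/
noncomputable def mi (μ : Ω → ℝ) {α β : Type*} [Fintype α] [DecidableEq α]
    [Fintype β] [DecidableEq β] (X : Ω → α) (Y : Ω → β) : ℝ :=
  ent μ X + ent μ Y - ent μ (fun ω => (X ω, Y ω))

/-- Conditional mutual information `I(X;Y|Z)` (in bits). -/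
noncomputable def condMI (μ : Ω → ℝ) {α β γ : Type*} [Fintype α] [DecidableEq α]
    [Fintype β] [DecidableEq β] [Fintype γ] [DecidableEq γ]
    (X : Ω → α) (Y : Ω → β) (Z : Ω → γ) : ℝ :=
  ent μ (fun ω => (X ω, Z ω)) + ent μ (fun ω => (Y ω, Z ω))
    - ent μ (fun ω => (X ω, Y ω, Z ω)) - ent μ Z

/-- `μ` is a probability weight function. -/
def IsProb (μ : Ω → ℝ) : Prop := (∀ ω, 0 ≤ μ ω) ∧ ∑ ω, μ ω = 1

/-! The noise `N` is independent of the input `W = (X0, X1)`, and for fixed `W` the output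
`Y = (X0, X1 ⊕ N)` determines `N`; hence `H(W, Y) = H(W, N) = H(W) + H(N)` and
`I(W; Y) = H(Y) - H(N) = H(Y) - 1`. As `Y` takes four values, `H(Y) ≤ 2`, and a uniform input
makes `Y` uniform, so the bound `1` is attained. -/

open Real

section Entropy

variable {μ : Ω → ℝ} {α β γ : Type*} [Fintype α] [DecidableEq α] [Fintype β] [DecidableEq β]
  [Fintype γ] [DecidableEq γ]

lemma pm_nonneg (hμ : ∀ ω, 0 ≤ μ ω) (X : Ω → α) (a : α) : 0 ≤ pm μ X a :=
  Finset.sum_nonneg fun ω _ => by split <;> simp [hμ ω]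

lemma sum_pm (X : Ω → α) : ∑ a, pm μ X a = ∑ ω, μ ω := by
  simp only [pm]
  rw [Finset.sum_comm]
  simp

lemma IsProb.sum_pm_eq_one (hμ : IsProb μ) (X : Ω → α) : ∑ a, pm μ X a = 1 :=
  (sum_pm X).trans hμ.2

lemma pm_congr {X : Ω → α} {Y : Ω → β} {a : α} {b : β} (h : ∀ ω, X ω = a ↔ Y ω = b) :
    pm μ X a = pm μ Y b :=
  Finset.sum_congr rfl fun ω _ => by simp only [h]

lemma sum_pm_prod (X : Ω → α) (Y : Ω → β) (a : α) :
    ∑ b, pm μ (fun ω => (X ω, Y ω)) (a, b) = pm μ X a := by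
  simp only [pm, Prod.mk.injEq, ite_and]
  rw [Finset.sum_comm]
  simp

lemma ent_eq_sum_negMulLog (X : Ω → α) :
    ent μ X = (∑ a, negMulLog (pm μ X a)) / log 2 := by
  simp only [ent, logb, negMulLog, Finset.sum_div, ← Finset.sum_neg_distrib]
  exact Finset.sum_congr rfl fun a _ => by ring

lemma ent_comp_of_injective {f : α → β} (hf : f.Injective) (X : Ω → α) :
    ent μ (fun ω => f (X ω)) = ent μ X := by
  have hzero : ∀ b ∉ Finset.univ.map ⟨f, hf⟩, pm μ (fun ω => f (X ω)) b = 0 := fun b hb =>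
    Finset.sum_eq_zero fun ω _ => if_neg fun h => hb (by simp [← h])
  rw [ent_eq_sum_negMulLog, ent_eq_sum_negMulLog,
    ← Finset.sum_subset (Finset.subset_univ _) fun b _ hb => by rw [hzero b hb, negMulLog_zero],
    Finset.sum_map]
  exact congrArg (· / log 2) <| Finset.sum_congr rfl fun a _ => by
    rw [Function.Embedding.coeFn_mk, pm_congr fun ω => hf.eq_iff]

lemma negMulLog_inv (x : ℝ) : negMulLog x⁻¹ = x⁻¹ * log x := by
  simp [negMulLog, log_inv]

lemma ent_eq_logb_card_of_uniform {X : Ω → α} (h : ∀ a, pm μ X a = (Fintype.card α : ℝ)⁻¹) :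
    ent μ X = logb 2 (Fintype.card α) := by
  simp only [ent_eq_sum_negMulLog, h, Finset.sum_const, Finset.card_univ, nsmul_eq_mul,
    negMulLog_inv, logb, ← mul_assoc]
  rcases eq_or_ne (Fintype.card α : ℝ) 0 with hn | hn
  · simp [hn]
  · rw [mul_inv_cancel₀ hn, one_mul]

lemma ent_le_logb_card (hμ : IsProb μ) (X : Ω → α) : ent μ X ≤ logb 2 (Fintype.card α) := by
  set n : ℝ := (Fintype.card α : ℝ)
  have hα : Nonempty α := by
    by_contra h
    simpa [not_nonempty_iff.mp h] using hμ.sum_pm_eq_one X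
  have hn : 0 < n := by simp [n, Fintype.card_pos]
  have jensen := concaveOn_negMulLog.le_map_sum (t := Finset.univ) (w := fun _ => n⁻¹)
    (p := pm μ X) (fun _ _ => by positivity) (by simp [n, hn.ne'])
    (fun a _ => Set.mem_Ici.mpr (pm_nonneg hμ.1 X a))
  simp only [smul_eq_mul, ← Finset.mul_sum, hμ.sum_pm_eq_one, mul_one, negMulLog_inv] at jensen
  rw [ent_eq_sum_negMulLog, logb]
  gcongr
  exact le_of_mul_le_mul_left jensen (inv_pos.mpr hn)

def PmIndep (μ : Ω → ℝ) (X : Ω → α) (Y : Ω → β) : Prop :=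
  ∀ a b, pm μ (fun ω => (X ω, Y ω)) (a, b) = pm μ X a * pm μ Y b

lemma PmIndep.of_prod_left {X : Ω → α} {Y : Ω → β} {Z : Ω → γ}
    (h : PmIndep μ (fun ω => (X ω, Z ω)) Y) : PmIndep μ X Y := fun a b =>
  calc pm μ (fun ω => (X ω, Y ω)) (a, b)
      = ∑ c, pm μ (fun ω => ((X ω, Y ω), Z ω)) ((a, b), c) := (sum_pm_prod _ _ _).symm
    _ = ∑ c, pm μ (fun ω => ((X ω, Z ω), Y ω)) ((a, c), b) :=
        Finset.sum_congr rfl fun c _ => pm_congr fun ω => by simp only [Prod.mk.injEq]; tauto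
    _ = pm μ X a * pm μ Y b := by
        rw [Finset.sum_congr rfl fun c _ => h (a, c) b, ← Finset.sum_mul, sum_pm_prod]

lemma PmIndep.ent_prod (hμ : IsProb μ) {X : Ω → α} {Y : Ω → β} (h : PmIndep μ X Y) :
    ent μ (fun ω => (X ω, Y ω)) = ent μ X + ent μ Y := by
  have hsum : ∑ a, ∑ b, negMulLog (pm μ (fun ω => (X ω, Y ω)) (a, b))
      = ∑ a, negMulLog (pm μ X a) + ∑ b, negMulLog (pm μ Y b) := by
    simp only [h _ _, negMulLog_mul, Finset.sum_add_distrib, ← Finset.mul_sum,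
      ← Finset.sum_mul, hμ.sum_pm_eq_one, one_mul]
  rw [ent_eq_sum_negMulLog, ent_eq_sum_negMulLog, ent_eq_sum_negMulLog, Fintype.sum_prod_type,
    hsum, add_div]

lemma mi_eq_ent_sub_of_injective (hμ : IsProb μ) {X : Ω → α} {N : Ω → β} {f : α → β → γ}
    (hf : ∀ a, (f a).Injective) (h : PmIndep μ X N) :
    mi μ X (fun ω => f (X ω) (N ω)) = ent μ (fun ω => f (X ω) (N ω)) - ent μ N := by
  have hinj : (fun p : α × β => (p.1, f p.1 p.2)).Injective := by
    rintro ⟨a, n⟩ ⟨a', n'⟩ hp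
    simp only [Prod.mk.injEq] at hp
    obtain ⟨rfl, hn⟩ := hp
    rw [hf a hn]
  have hjoint := ent_comp_of_injective (μ := μ) hinj (fun ω => (X ω, N ω))
  rw [mi, hjoint, h.ent_prod hμ]
  ring

lemma ent_eq_one_of_pm_true_eq_half (hμ : IsProb μ) {N : Ω → Bool} (hN : pm μ N true = 1 / 2) :
    ent μ N = 1 := by
  have hsum := hμ.sum_pm_eq_one N
  rw [Fintype.sum_bool, hN] at hsum
  have huniform : ∀ b, pm μ N b = (Fintype.card Bool : ℝ)⁻¹ := by
    rintro (_ | _)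
    · norm_num [Fintype.card_bool]
      linarith
    · norm_num [Fintype.card_bool, hN]
  rw [ent_eq_logb_card_of_uniform huniform, Fintype.card_bool, Nat.cast_ofNat,
    logb_self_eq_one one_lt_two]

lemma dueck_mi_eq_ent_output_sub_one (hμ : IsProb μ) (X0 X1 X2 N : Ω → Bool)
    (hind : ∀ a b c n : Bool,
      pm μ (fun ω => (X0 ω, X1 ω, X2 ω, N ω)) (a, b, c, n)
        = pm μ (fun ω => (X0 ω, X1 ω, X2 ω)) (a, b, c) * pm μ N n)
    (hN : pm μ N true = 1 / 2) :
    mi μ (fun ω => (X0 ω, X1 ω)) (fun ω => (X0 ω, Bool.xor (X1 ω) (N ω)))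
      = ent μ (fun ω => (X0 ω, Bool.xor (X1 ω) (N ω))) - 1 := by
  have hindep : PmIndep μ (fun ω => ((X0 ω, X1 ω), X2 ω)) N := by
    rintro ⟨⟨a, b⟩, c⟩ n
    have hjoint : pm μ (fun ω => (((X0 ω, X1 ω), X2 ω), N ω)) (((a, b), c), n)
        = pm μ (fun ω => (X0 ω, X1 ω, X2 ω, N ω)) (a, b, c, n) :=
      pm_congr fun ω => by simp only [Prod.mk.injEq, and_assoc]
    have hinput : pm μ (fun ω => ((X0 ω, X1 ω), X2 ω)) ((a, b), c)
        = pm μ (fun ω => (X0 ω, X1 ω, X2 ω)) (a, b, c) :=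
      pm_congr fun ω => by simp only [Prod.mk.injEq, and_assoc]
    rw [hjoint, hinput, hind]
  have hinj : ∀ w : Bool × Bool, (fun n => (w.1, Bool.xor w.2 n)).Injective :=
    fun w n n' h => by simpa using h
  rw [mi_eq_ent_sub_of_injective hμ hinj (hindep.of_prod_left (X := fun ω => (X0 ω, X1 ω))),
    ent_eq_one_of_pm_true_eq_half hμ hN]

end Entropy

/-- For the Dueck broadcast channel, without feedback the maximum over
input distributions of `I(X0 X1; Y)`, with `Y = (X0, X1 ⊕ N)` and `N ~ Bernoulli(1/2)`
independent of the input, equals 1 bit. -/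
theorem dueck_no_feedback_max_one :
    (∀ (Ω : Type) [Fintype Ω] (μ : Ω → ℝ) (X0 X1 X2 N : Ω → Bool),
      IsProb μ →
      (∀ a b c n : Bool,
        pm μ (fun ω => (X0 ω, X1 ω, X2 ω, N ω)) (a, b, c, n)
          = pm μ (fun ω => (X0 ω, X1 ω, X2 ω)) (a, b, c) * pm μ N n) →
      pm μ N true = 1 / 2 →
      mi μ (fun ω => (X0 ω, X1 ω))
        (fun ω => (X0 ω, Bool.xor (X1 ω) (N ω))) ≤ 1) ∧
    (∃ (μ : Bool × Bool × Bool × Bool → ℝ)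
       (X0 X1 X2 N : Bool × Bool × Bool × Bool → Bool),
      IsProb μ ∧
      (∀ a b c n : Bool,
        pm μ (fun ω => (X0 ω, X1 ω, X2 ω, N ω)) (a, b, c, n)
          = pm μ (fun ω => (X0 ω, X1 ω, X2 ω)) (a, b, c) * pm μ N n) ∧
      pm μ N true = 1 / 2 ∧
      mi μ (fun ω => (X0 ω, X1 ω))
        (fun ω => (X0 ω, Bool.xor (X1 ω) (N ω))) = 1) := by
  have logb_four : logb 2 (4 : ℝ) = 2 := by
    rw [show (4 : ℝ) = 2 ^ 2 by norm_num, logb_pow, logb_self_eq_one one_lt_two, mul_one]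
    norm_num
  constructor
  · intro Ω _ μ X0 X1 X2 N hμ hind hN
    have hY := ent_le_logb_card hμ fun ω => (X0 ω, Bool.xor (X1 ω) (N ω))
    norm_num [Fintype.card_prod, Fintype.card_bool, logb_four] at hY
    rw [dueck_mi_eq_ent_output_sub_one hμ X0 X1 X2 N hind hN]
    linarith
  · set μ : Bool × Bool × Bool × Bool → ℝ := fun _ => 1 / 16
    have hμ : IsProb μ := ⟨fun _ => by norm_num [μ], by simp [μ]⟩
    have hind : ∀ a b c n : Bool,
        pm μ (fun ω => (ω.1, ω.2.1, ω.2.2.1, ω.2.2.2)) (a, b, c, n)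
          = pm μ (fun ω => (ω.1, ω.2.1, ω.2.2.1)) (a, b, c) * pm μ (fun ω => ω.2.2.2) n := by
      intro a b c n
      cases a <;> cases b <;> cases c <;> cases n <;>
        norm_num [pm, μ, Fintype.sum_prod_type]
    have hN : pm μ (fun ω => ω.2.2.2) true = 1 / 2 := by norm_num [pm, μ, Fintype.sum_prod_type]
    refine ⟨μ, _, _, _, _, hμ, hind, hN, ?_⟩
    rw [dueck_mi_eq_ent_output_sub_one hμ _ _ _ _ hind hN, ent_eq_logb_card_of_uniform,
      Fintype.card_prod, Fintype.card_bool]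
    · norm_num [logb_four]
    · rintro ⟨_ | _, _ | _⟩ <;> norm_num [pm, μ, Fintype.sum_prod_type]
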